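/- The M2-subalgebra A(1) of the motivic Steenrod algebra generated by Sq1 and Sq2 has presentation M2[Sq1,Sq2]/(Sq1Sq1 = 0, Sq2Sq2 = τ·Sq1Sq2Sq1, Sq1Sq2Sq1Sq2 = Sq2Sq1Sq2Sq1). In particular, the relation Sq1Sq2Sq1Sq2 = Sq2Sq1Sq2Sq1 is not a consequence of the other two relations over M2 = F2[τ], since the relation Sq2Sq2 = τ·Sq1Sq2Sq1 only implies τ·Sq1Sq2Sq1Sq2 = τ·Sq2Sq1Sq2Sq1. -/
import Mathlib


/-!
STATEMENT 2.  `A(1)`, the `M2`-subalgebra of the motivic Steenrod algebra generated by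
`Sq¹` (bidegree (1,0)) and `Sq²` (bidegree (2,1)), has the presentation
`M2⟨Sq¹,Sq²⟩/(Sq¹Sq¹ = 0, Sq²Sq² = τ Sq¹Sq²Sq¹, Sq¹Sq²Sq¹Sq² = Sq²Sq¹Sq²Sq¹)`.
In particular the relation `Sq¹Sq²Sq¹Sq² = Sq²Sq¹Sq²Sq¹` is NOT a consequence of the
first two relations: in the quotient by the first two relations only, one merely has
`τ·Sq¹Sq²Sq¹Sq² = τ·Sq²Sq¹Sq²Sq¹`, while `Sq¹Sq²Sq¹Sq² ≠ Sq²Sq¹Sq²Sq¹` there.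
-/

noncomputable section

/-- `M2 = 𝔽₂[τ]`. -/
abbrev M2 : Type := Polynomial (ZMod 2)

/-- `τ ∈ M2`. -/
abbrev τ : M2 := Polynomial.X

/-- The free (noncommutative) `M2`-algebra on the symbols `Sq¹, Sq²`. -/
abbrev F : Type := FreeAlgebra M2 (Fin 2)

/-- The symbol `Sq¹`. -/
def s1 : F := FreeAlgebra.ι M2 0

/-- The symbol `Sq²`. -/
def s2 : F := FreeAlgebra.ι M2 1

/-- The first two (Adem) relations only. -/
inductive TwoRel : F → F → Prop
  | adem11 : TwoRel (s1 * s1) 0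
  | adem22 : TwoRel (s2 * s2) (τ • (s1 * s2 * s1))

/-- All three defining relations of motivic `A(1)`. -/
inductive A1Rel : F → F → Prop
  | adem11 : A1Rel (s1 * s1) 0
  | adem22 : A1Rel (s2 * s2) (τ • (s1 * s2 * s1))
  | comm4  : A1Rel (s1 * s2 * s1 * s2) (s2 * s1 * s2 * s1)

/-- The quotient by the first two relations only. -/
abbrev C2 : Type := RingQuot TwoRel

/-- Motivic `A(1)`, defined by the full presentation. -/
abbrev A1 : Type := RingQuot A1Rel

/- ### Auxiliary definitions for the proof -/


abbrev Mat : Type := Matrix (Fin 5) (Fin 5) (ZMod 2)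
def ma : Mat := !![0,0,0,0,0; 0,0,0,0,0; 0,1,0,0,0; 0,0,0,0,0; 0,0,0,1,0]
def mb : Mat := !![0,0,0,0,0; 1,0,0,0,0; 0,0,0,0,0; 0,0,1,0,0; 0,0,0,0,0]

lemma range_fin_two {β : Type*} (g : Fin 2 → β) : Set.range g = {g 0, g 1} := by
  ext a
  simp [Set.mem_range, Fin.exists_fin_two, eq_comm]

instance zmodAlg : Algebra M2 (ZMod 2) :=
  RingHom.toAlgebra (Polynomial.evalRingHom 0)

lemma algebraMap_M2_zmod (p : M2) : algebraMap M2 (ZMod 2) p = Polynomial.eval 0 p := rfl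

lemma tau_smul_mat (m : Mat) : τ • m = 0 := by
  rw [Algebra.smul_def]
  have h0 : algebraMap M2 Mat τ = 0 := by
    rw [Matrix.algebraMap_eq_diagonal]
    have : algebraMap M2 ((Fin 5) → ZMod 2) τ = fun _ => 0 := by
      funext i
      simp [Pi.algebraMap_def, algebraMap_M2_zmod]
    rw [this, Matrix.diagonal_zero]
  rw [h0, zero_mul]

def matHom : F →ₐ[M2] Mat := FreeAlgebra.lift M2 ![ma, mb]

lemma matHom_s1 : matHom s1 = ma := FreeAlgebra.lift_ι_apply _ _
lemma matHom_s2 : matHom s2 = mb := FreeAlgebra.lift_ι_apply _ _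

lemma matHom_rel : ∀ ⦃x y : F⦄, TwoRel x y → matHom x = matHom y := by
  intro x y h
  cases h with
  | adem11 => simp [matHom_s1]; decide
  | adem22 =>
      simp only [map_mul, map_smul, matHom_s1, matHom_s2, tau_smul_mat]
      decide


theorem A1_presentation_and_independence_of_third_relation
    -- an ambient "motivic Steenrod algebra": an `M2`-algebra containing elements
    -- `u = Sq¹`, `v = Sq²` satisfying the three relations, with the eight
    -- admissible monomials `M2`-linearly independent (as forced by the bigrading)
    (A : Type) [Ring A] [Algebra M2 A] (u v : A)
    (h11 : u * u = 0)
    (h22 : v * v = τ • (u * v * u))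
    (h4 : u * v * u * v = v * u * v * u)
    (hind : LinearIndependent M2
      ![(1 : A), u, v, v * u, u * v, u * v * u, v * u * v, v * u * v * u]) :
    -- (1) `A(1)` as presented is (isomorphic to) the subalgebra generated by `Sq¹, Sq²`
    (∃ e : A1 ≃ₐ[M2] Algebra.adjoin M2 {u, v},
        (e (RingQuot.mkAlgHom M2 A1Rel s1) : A) = u ∧
        (e (RingQuot.mkAlgHom M2 A1Rel s2) : A) = v) ∧
    -- (2) modulo the first two relations only, `τ·Sq¹Sq²Sq¹Sq² = τ·Sq²Sq¹Sq²Sq¹` ...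
    (τ • RingQuot.mkAlgHom M2 TwoRel (s1 * s2 * s1 * s2) =
      τ • RingQuot.mkAlgHom M2 TwoRel (s2 * s1 * s2 * s1)) ∧
    -- (3) ... but `Sq¹Sq²Sq¹Sq² ≠ Sq²Sq¹Sq²Sq¹` there: the third relation is not a
    -- consequence of the other two
    (RingQuot.mkAlgHom M2 TwoRel (s1 * s2 * s1 * s2) ≠
      RingQuot.mkAlgHom M2 TwoRel (s2 * s1 * s2 * s1)) := by
  refine ⟨?_, ?_, ?_⟩
  · -- part (1)
    set mk : F →ₐ[M2] A1 := RingQuot.mkAlgHom M2 A1Rel with hmk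
    set x1 : A1 := mk s1 with hx1def
    set x2 : A1 := mk s2 with hx2def
    have r1 : x1 * x1 = 0 := by
      have := RingQuot.mkAlgHom_rel M2 A1Rel.adem11
      simpa [hmk, hx1def] using this
    have r2 : x2 * x2 = τ • (x1 * x2 * x1) := by
      have := RingQuot.mkAlgHom_rel M2 A1Rel.adem22
      simpa [hmk, hx1def, hx2def] using this
    have r3 : x1 * x2 * x1 * x2 = x2 * x1 * x2 * x1 := by
      have := RingQuot.mkAlgHom_rel M2 A1Rel.comm4
      simpa [hmk, hx1def, hx2def] using this
    set b : Fin 8 → A1 :=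
      ![(1 : A1), x1, x2, x2 * x1, x1 * x2, x1 * x2 * x1, x2 * x1 * x2, x2 * x1 * x2 * x1]
      with hb
    set S : Submodule M2 A1 := Submodule.span M2 (Set.range b) with hS
    have hbmem : ∀ i, b i ∈ S := fun i => Submodule.subset_span ⟨i, rfl⟩
    -- left-multiplication stability
    have hmul1 : ∀ m ∈ S, x1 * m ∈ S := by
      intro m hm
      induction hm using Submodule.span_induction with
      | mem y hy =>
          obtain ⟨i, rfl⟩ := hy
          fin_cases i
          · simpa [hb] using hbmem 1
          · show x1 * x1 ∈ S; rw [r1]; exact S.zero_mem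
          · simpa [hb] using hbmem 4
          · show x1 * (x2 * x1) ∈ S
            rw [← mul_assoc]; simpa [hb] using hbmem 5
          · show x1 * (x1 * x2) ∈ S
            rw [← mul_assoc, r1, zero_mul]; exact S.zero_mem
          · show x1 * (x1 * x2 * x1) ∈ S
            rw [show x1 * (x1 * x2 * x1) = (x1 * x1) * x2 * x1 by noncomm_ring, r1]
            simpa using S.zero_mem
          · show x1 * (x2 * x1 * x2) ∈ S
            rw [show x1 * (x2 * x1 * x2) = x1 * x2 * x1 * x2 by noncomm_ring, r3]
            simpa [hb] using hbmem 7
          · show x1 * (x2 * x1 * x2 * x1) ∈ S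
            rw [show x1 * (x2 * x1 * x2 * x1) = (x1 * x2 * x1 * x2) * x1 by noncomm_ring, r3,
              show x2 * x1 * x2 * x1 * x1 = x2 * x1 * x2 * (x1 * x1) by noncomm_ring, r1]
            simpa using S.zero_mem
      | zero => simpa using S.zero_mem
      | add y z _ _ hy hz => rw [mul_add]; exact S.add_mem hy hz
      | smul c y _ hy => rw [mul_smul_comm]; exact S.smul_mem c hy
    have hmul2 : ∀ m ∈ S, x2 * m ∈ S := by
      intro m hm
      induction hm using Submodule.span_induction with
      | mem y hy =>
          obtain ⟨i, rfl⟩ := hy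
          fin_cases i
          · simpa [hb] using hbmem 2
          · simpa [hb] using hbmem 3
          · show x2 * x2 ∈ S; rw [r2]; exact S.smul_mem τ (hbmem 5)
          · show x2 * (x2 * x1) ∈ S
            rw [← mul_assoc, r2, smul_mul_assoc,
              show x1 * x2 * x1 * x1 = x1 * x2 * (x1 * x1) by noncomm_ring, r1]
            simpa using S.zero_mem
          · show x2 * (x1 * x2) ∈ S
            rw [← mul_assoc]; simpa [hb] using hbmem 6
          · show x2 * (x1 * x2 * x1) ∈ S
            rw [show x2 * (x1 * x2 * x1) = x2 * x1 * x2 * x1 by noncomm_ring]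
            exact hbmem 7
          · show x2 * (x2 * x1 * x2) ∈ S
            rw [show x2 * (x2 * x1 * x2) = (x2 * x2) * x1 * x2 by noncomm_ring, r2,
              smul_mul_assoc, smul_mul_assoc,
              show x1 * x2 * x1 * x1 * x2 = x1 * x2 * (x1 * x1) * x2 by noncomm_ring, r1]
            simpa using S.zero_mem
          · show x2 * (x2 * x1 * x2 * x1) ∈ S
            rw [show x2 * (x2 * x1 * x2 * x1) = (x2 * x2) * x1 * x2 * x1 by noncomm_ring, r2,
              smul_mul_assoc, smul_mul_assoc, smul_mul_assoc,
              show x1 * x2 * x1 * x1 * x2 * x1 = x1 * x2 * (x1 * x1) * x2 * x1 by noncomm_ring,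
              r1]
            simpa using S.zero_mem
      | zero => simpa using S.zero_mem
      | add y z _ _ hy hz => rw [mul_add]; exact S.add_mem hy hz
      | smul c y _ hy => rw [mul_smul_comm]; exact S.smul_mem c hy
    -- A1 is generated by x1, x2
    have hadj : Algebra.adjoin M2 ({x1, x2} : Set A1) = ⊤ := by
      have hsurj : Function.Surjective (mk : F → A1) :=
        RingQuot.mkAlgHom_surjective M2 A1Rel
      have h1 : (⊤ : Subalgebra M2 A1) = (⊤ : Subalgebra M2 F).map mk := by
        rw [Algebra.map_top, (AlgHom.range_eq_top _).mpr hsurj]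
      rw [h1, ← FreeAlgebra.adjoin_range_ι, AlgHom.map_adjoin, ← Set.range_comp,
        range_fin_two]
      rfl
    -- every element of A1 is in S
    have hspan : ∀ a : A1, a ∈ S := by
      have key : ∀ a : A1, ∀ m ∈ S, a * m ∈ S := by
        intro a
        have ha : a ∈ Algebra.adjoin M2 ({x1, x2} : Set A1) := hadj ▸ Algebra.mem_top
        induction ha using Algebra.adjoin_induction with
        | mem y hy =>
            rcases hy with rfl | rfl
            · exact hmul1
            · exact hmul2
        | algebraMap r =>
            intro m hm
            rw [Algebra.algebraMap_eq_smul_one, smul_mul_assoc, one_mul]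
            exact S.smul_mem r hm
        | add y z _ _ hy hz =>
            intro m hm
            rw [add_mul]; exact S.add_mem (hy m hm) (hz m hm)
        | mul y z _ _ hy hz =>
            intro m hm
            rw [mul_assoc]; exact hy _ (hz m hm)
      intro a
      simpa using key a 1 (hbmem 0)
    -- the algebra hom to A
    have hrelA : ∀ ⦃x y : F⦄, A1Rel x y →
        (FreeAlgebra.lift M2 ![u, v]) x = (FreeAlgebra.lift M2 ![u, v]) y := by
      intro x y h
      cases h with
      | adem11 => simpa [s1] using h11
      | adem22 => simpa [s1, s2] using h22
      | comm4 => simpa [s1, s2] using h4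
    set φ : A1 →ₐ[M2] A := RingQuot.liftAlgHom M2 ⟨FreeAlgebra.lift M2 ![u, v], hrelA⟩ with hφ
    have hφ1 : φ x1 = u := by
      rw [hx1def, hmk, hφ, RingQuot.liftAlgHom_mkAlgHom_apply]
      simp [s1]
    have hφ2 : φ x2 = v := by
      rw [hx2def, hmk, hφ, RingQuot.liftAlgHom_mkAlgHom_apply]
      simp [s2]
    set w : Fin 8 → A :=
      ![(1 : A), u, v, v * u, u * v, u * v * u, v * u * v, v * u * v * u] with hw
    have hφb : ∀ i, φ (b i) = w i := by
      intro i
      fin_cases i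
      · exact map_one φ
      · exact hφ1
      · exact hφ2
      · show φ (x2 * x1) = v * u
        rw [map_mul, hφ1, hφ2]
      · show φ (x1 * x2) = u * v
        rw [map_mul, hφ1, hφ2]
      · show φ (x1 * x2 * x1) = u * v * u
        rw [map_mul, map_mul, hφ1, hφ2]
      · show φ (x2 * x1 * x2) = v * u * v
        rw [map_mul, map_mul, hφ1, hφ2]
      · show φ (x2 * x1 * x2 * x1) = v * u * v * u
        rw [map_mul, map_mul, map_mul, hφ1, hφ2]
    have hinj : Function.Injective φ := by
      rw [injective_iff_map_eq_zero]
      intro a ha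
      obtain ⟨c, hc⟩ := (Submodule.mem_span_range_iff_exists_fun M2).mp (hspan a)
      have h0 : ∑ i, c i • w i = 0 := by
        rw [← ha, ← hc, map_sum]
        congr 1; ext i
        rw [map_smul, hφb]
      have hc0 : ∀ i, c i = 0 := Fintype.linearIndependent_iff.mp hind c h0
      rw [← hc]
      simp [hc0]
    have hrange : φ.range = Algebra.adjoin M2 ({u, v} : Set A) := by
      have h1 : φ.range = (FreeAlgebra.lift M2 ![u, v]).range := by
        apply le_antisymm
        · rintro y hy
          rw [AlgHom.mem_range] at hy ⊢
          obtain ⟨a, rfl⟩ := hy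
          obtain ⟨x, rfl⟩ := RingQuot.mkAlgHom_surjective M2 A1Rel a
          exact ⟨x, (RingQuot.liftAlgHom_mkAlgHom_apply M2 _ _ _).symm⟩
        · rintro y hy
          rw [AlgHom.mem_range] at hy ⊢
          obtain ⟨x, rfl⟩ := hy
          exact ⟨RingQuot.mkAlgHom M2 A1Rel x,
            RingQuot.liftAlgHom_mkAlgHom_apply M2 _ _ _⟩
      rw [h1, ← Algebra.adjoin_range_eq_range_freeAlgebra_lift, range_fin_two]
      rfl
    refine ⟨(AlgEquiv.ofInjective φ hinj).trans (Subalgebra.equivOfEq _ _ hrange), ?_, ?_⟩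
    · show (((AlgEquiv.ofInjective φ hinj) x1 : φ.range) : A) = u
      rw [AlgEquiv.ofInjective_apply]
      exact hφ1
    · show (((AlgEquiv.ofInjective φ hinj) x2 : φ.range) : A) = v
      rw [AlgEquiv.ofInjective_apply]
      exact hφ2
  · -- part (2)
    set mk2 : F →ₐ[M2] C2 := RingQuot.mkAlgHom M2 TwoRel with hmk2
    have r2 : mk2 s2 * mk2 s2 = τ • (mk2 s1 * mk2 s2 * mk2 s1) := by
      have := RingQuot.mkAlgHom_rel M2 TwoRel.adem22
      simpa [hmk2] using this
    have key : τ • (mk2 s1 * mk2 s2 * mk2 s1 * mk2 s2) =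
        τ • (mk2 s2 * mk2 s1 * mk2 s2 * mk2 s1) := by
      calc τ • (mk2 s1 * mk2 s2 * mk2 s1 * mk2 s2)
          = (τ • (mk2 s1 * mk2 s2 * mk2 s1)) * mk2 s2 := by rw [smul_mul_assoc]
        _ = (mk2 s2 * mk2 s2) * mk2 s2 := by rw [r2]
        _ = mk2 s2 * (mk2 s2 * mk2 s2) := by rw [mul_assoc]
        _ = mk2 s2 * (τ • (mk2 s1 * mk2 s2 * mk2 s1)) := by rw [r2]
        _ = τ • (mk2 s2 * (mk2 s1 * mk2 s2 * mk2 s1)) := by rw [mul_smul_comm]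
        _ = τ • (mk2 s2 * mk2 s1 * mk2 s2 * mk2 s1) := by noncomm_ring
    simpa [hmk2, map_mul] using key
  · -- part (3)
    intro h
    set ψ : C2 →ₐ[M2] Mat := RingQuot.liftAlgHom M2 ⟨matHom, matHom_rel⟩ with hψ
    have := congrArg ψ h
    rw [hψ, RingQuot.liftAlgHom_mkAlgHom_apply, RingQuot.liftAlgHom_mkAlgHom_apply] at this
    simp only [map_mul, matHom_s1, matHom_s2] at this
    exact absurd this (by decide)


end
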